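/- arXiv:1010.5689 — 4 statements merged into one kernel-verified Lean document; each statement's English description precedes it below -/
import Mathlib

section
/- Let α ∈ L¹(ℝ), let w be C¹ with w(0) = 0, let 1 ≤ p < ∞, and let u ∈ L^p(ℝ) ∩ L^∞(ℝ) with ‖u‖_∞ ≤ R. With M(R) = max_{|η| ≤ 2R} |w'(η)| and (Ku)(x) = ∫_ℝ α(y - x) w(u(y) - u(x)) dy, one has Ku ∈ L^p(ℝ) with ‖Ku‖_{L^p} ≤ 2 M(R) ‖α‖_{L¹} ‖u‖_{L^p}. -/
open Set MeasureTheory ENNReal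

/-!
For `|a|, |b| ≤ R` the mean value theorem gives `|w (a - b)| ≤ M(R) (|a| + |b|)`, hence
`|Ku(x)| ≤ M(R) ((|u| ⋆ |α̌|)(x) + ‖α‖₁ |u x|)` with `α̌ z = α (-z)`. Young's inequality
`‖g ⋆ f‖_p ≤ ‖g‖₁ ‖f‖_p` bounds the first term by `‖α‖₁ ‖u‖_p`; it follows from Hölder's
inequality with respect to the weight `g`, `(∫ g f)^p ≤ (∫ g)^(p-1) ∫ g f^p`, and Tonelli.
-/

/-- M(R) = max of |w'| on [-2R, 2R]. -/
noncomputable def Mmax (w : ℝ → ℝ) (R : ℝ) : ℝ :=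
  sSup ((fun η => |deriv w η|) '' Icc (-(2*R)) (2*R))

theorem Mmax_nonneg (w : ℝ → ℝ) (R : ℝ) : 0 ≤ Mmax w R :=
  Real.sSup_nonneg (by rintro _ ⟨η, -, rfl⟩; exact abs_nonneg _)

theorem abs_le_Mmax_mul_abs {w : ℝ → ℝ} (hw : ContDiff ℝ 1 w) (hw0 : w 0 = 0) {R t : ℝ}
    (ht : |t| ≤ 2 * R) : |w t| ≤ Mmax w R * |t| := by
  have hbdd : BddAbove ((fun η => |deriv w η|) '' Icc (-(2 * R)) (2 * R)) :=
    (isCompact_Icc.image (hw.continuous_deriv le_rfl).abs).bddAbove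
  have h0 : (0 : ℝ) ∈ Icc (-(2 * R)) (2 * R) := abs_le.mp (by simpa using (abs_nonneg t).trans ht)
  simpa [hw0, Real.norm_eq_abs, Mmax] using (convex_Icc _ _).norm_image_sub_le_of_norm_deriv_le
    (fun x _ => hw.differentiable one_ne_zero x)
    (fun x hx => le_csSup hbdd ⟨x, hx, rfl⟩) h0 (abs_le.mp ht)

theorem enorm_comp_sub_le_Mmax_mul {w : ℝ → ℝ} (hw : ContDiff ℝ 1 w) (hw0 : w 0 = 0)
    {R a b : ℝ} (ha : |a| ≤ R) (hb : |b| ≤ R) :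
    ‖w (a - b)‖ₑ ≤ ENNReal.ofReal (Mmax w R) * (‖a‖ₑ + ‖b‖ₑ) := by
  have hab : |a - b| ≤ |a| + |b| := abs_sub a b
  have : |w (a - b)| ≤ Mmax w R * (|a| + |b|) :=
    (abs_le_Mmax_mul_abs hw hw0 (by linarith)).trans
      (mul_le_mul_of_nonneg_left hab (Mmax_nonneg w R))
  rw [← ofReal_norm, ← ofReal_norm, ← ofReal_norm,
    ← ENNReal.ofReal_add (norm_nonneg _) (norm_nonneg _), ← ENNReal.ofReal_mul (Mmax_nonneg w R)]
  exact ENNReal.ofReal_le_ofReal this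

noncomputable def nonlocalOp (α w u : ℝ → ℝ) (x : ℝ) : ℝ :=
  ∫ y, α (y - x) * w (u y - u x)

theorem aestronglyMeasurable_nonlocalOp {α w u : ℝ → ℝ} (hα : AEStronglyMeasurable α)
    (hw : Continuous w) (hu : AEStronglyMeasurable u) :
    AEStronglyMeasurable (nonlocalOp α w u) := by
  have hα' : AEStronglyMeasurable (fun p : ℝ × ℝ => α (p.2 - p.1)) (volume.prod volume) :=
    hα.comp_quasiMeasurePreserving ((quasiMeasurePreserving_sub volume volume).comp
      (Measure.measurePreserving_swap (μ := volume) (ν := volume)).quasiMeasurePreserving)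
  exact (hα'.mul (hw.comp_aestronglyMeasurable (hu.comp_snd.sub hu.comp_fst))).integral_prod_right'

theorem lintegral_mul_rpow_le {X : Type*} [MeasurableSpace X] {μ : Measure X} {q : ℝ} (hq : 1 ≤ q)
    {a f : X → ℝ≥0∞} (ha : AEMeasurable a μ) (hf : AEMeasurable f μ) :
    (∫⁻ x, a x * f x ∂μ) ^ q ≤ (∫⁻ x, a x ∂μ) ^ (q - 1) * ∫⁻ x, a x * f x ^ q ∂μ := by
  rcases hq.eq_or_lt with rfl | hq
  · simp
  have hpq : (q.conjExponent).HolderConjugate q := (Real.HolderConjugate.conjExponent hq).symm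
  set r := q.conjExponent
  have hq0 : 0 < q := hpq.symm.pos
  have hr0 : 0 < r := hpq.pos
  -- Hölder for `a ^ (1/r)` and `a ^ (1/q) * f`, whose product is `a * f`.
  have holder := ENNReal.lintegral_mul_le_Lp_mul_Lq μ hpq
    (ha.pow_const (1 / r)) ((ha.pow_const (1 / q)).mul hf)
  have split : ∀ x, a x ^ (1 / r) * (a x ^ (1 / q) * f x) = a x * f x := fun x => by
    rw [← mul_assoc, ← ENNReal.rpow_add_of_nonneg _ _ (by positivity) (by positivity),
      one_div, one_div, hpq.inv_add_inv_eq_one, ENNReal.rpow_one]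
  have pow_r : ∀ x, (a x ^ (1 / r)) ^ r = a x := fun x => by
    rw [← ENNReal.rpow_mul, one_div_mul_cancel hr0.ne', ENNReal.rpow_one]
  have pow_q : ∀ x, (a x ^ (1 / q) * f x) ^ q = a x * f x ^ q := fun x => by
    rw [ENNReal.mul_rpow_of_nonneg _ _ hq0.le, ← ENNReal.rpow_mul, one_div_mul_cancel hq0.ne',
      ENNReal.rpow_one]
  simp only [Pi.mul_apply, split, pow_r, pow_q] at holder
  have exp_r : 1 / r * q = q - 1 := by
    rw [one_div, show r⁻¹ = 1 - q⁻¹ by linarith [hpq.inv_add_inv_eq_one]]; field_simp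
  calc (∫⁻ x, a x * f x ∂μ) ^ q
      ≤ ((∫⁻ x, a x ∂μ) ^ (1 / r) * (∫⁻ x, a x * f x ^ q ∂μ) ^ (1 / q)) ^ q := by
        gcongr
    _ = (∫⁻ x, a x ∂μ) ^ (q - 1) * ∫⁻ x, a x * f x ^ q ∂μ := by
        rw [ENNReal.mul_rpow_of_nonneg _ _ hq0.le, ← ENNReal.rpow_mul, ← ENNReal.rpow_mul, exp_r,
          one_div_mul_cancel hq0.ne', ENNReal.rpow_one]

section Young

variable {G : Type*} [AddGroup G] [MeasurableSpace G] [MeasurableAdd₂ G] [MeasurableNeg G]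
  {μ : Measure G} [SFinite μ] [μ.IsAddLeftInvariant] {f g : G → ℝ≥0∞}

theorem lintegral_lconvolution_rpow_le {q : ℝ} (hq : 1 ≤ q) (hg : AEMeasurable g μ)
    (hf : AEMeasurable f μ) :
    ∫⁻ x, (g ⋆ₗ[μ] f) x ^ q ∂μ ≤ (∫⁻ x, g x ∂μ) ^ q * ∫⁻ x, f x ^ q ∂μ := by
  calc ∫⁻ x, (g ⋆ₗ[μ] f) x ^ q ∂μ
      ≤ ∫⁻ x, (∫⁻ y, g y ∂μ) ^ (q - 1) * ∫⁻ y, g y * f (-y + x) ^ q ∂μ ∂μ :=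
        lintegral_mono fun x => lintegral_mul_rpow_le hq hg (by fun_prop)
    _ = (∫⁻ y, g y ∂μ) ^ (q - 1) * ∫⁻ y, ∫⁻ x, g y * f (-y + x) ^ q ∂μ ∂μ := by
        rw [lintegral_const_mul'' _ (by fun_prop), lintegral_lintegral_swap (by fun_prop)]
    _ = (∫⁻ y, g y ∂μ) ^ (q - 1) * ((∫⁻ y, g y ∂μ) * ∫⁻ x, f x ^ q ∂μ) := by
        congr 1
        rw [← lintegral_mul_const'' _ hg]
        refine lintegral_congr fun y => ?_
        have hf_shift : AEMeasurable (fun x => f (-y + x) ^ q) μ :=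
          (hf.pow_const q).comp_quasiMeasurePreserving
            (measurePreserving_add_left μ (-y)).quasiMeasurePreserving
        rw [lintegral_const_mul'' _ hf_shift, lintegral_add_left_eq_self (fun x => f x ^ q)]
    _ = (∫⁻ x, g x ∂μ) ^ q * ∫⁻ x, f x ^ q ∂μ := by
        rw [← mul_assoc]
        congr 1
        conv_rhs => rw [← sub_add_cancel q 1,
          ENNReal.rpow_add_of_nonneg _ _ (by linarith) zero_le_one, ENNReal.rpow_one]

theorem eLpNorm_lconvolution_le {p : ℝ≥0∞} (hp1 : 1 ≤ p) (hp : p ≠ ⊤) (hg : AEMeasurable g μ)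
    (hf : AEMeasurable f μ) :
    eLpNorm (g ⋆ₗ[μ] f) p μ ≤ (∫⁻ x, g x ∂μ) * eLpNorm f p μ := by
  have hp0 : p ≠ 0 := (zero_lt_one.trans_le hp1).ne'
  have hq : 1 ≤ p.toReal := by simpa using ENNReal.toReal_mono hp hp1
  simp only [eLpNorm_eq_lintegral_rpow_enorm_toReal hp0 hp, enorm_eq_self]
  calc (∫⁻ x, (g ⋆ₗ[μ] f) x ^ p.toReal ∂μ) ^ (1 / p.toReal)
      ≤ ((∫⁻ x, g x ∂μ) ^ p.toReal * ∫⁻ x, f x ^ p.toReal ∂μ) ^ (1 / p.toReal) := by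
        gcongr; exact lintegral_lconvolution_rpow_le hq hg hf
    _ = (∫⁻ x, g x ∂μ) * (∫⁻ x, f x ^ p.toReal ∂μ) ^ (1 / p.toReal) := by
        rw [ENNReal.mul_rpow_of_nonneg _ _ (by positivity), ← ENNReal.rpow_mul,
          mul_one_div_cancel (by positivity), ENNReal.rpow_one]

end Young

theorem enorm_nonlocalOp_le {α w u : ℝ → ℝ} (hα : AEMeasurable α) (hw : ContDiff ℝ 1 w)
    (hw0 : w 0 = 0) {R : ℝ} (hub : ∀ x, |u x| ≤ R) (x : ℝ) :
    ‖nonlocalOp α w u x‖ₑ ≤ ENNReal.ofReal (Mmax w R) *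
      (((fun y => ‖u y‖ₑ) ⋆ₗ (fun z => ‖α (-z)‖ₑ)) x + (∫⁻ y, ‖α y‖ₑ) * ‖u x‖ₑ) := by
  set M := ENNReal.ofReal (Mmax w R)
  have hα_shift : AEMeasurable (fun y => ‖α (y - x)‖ₑ) :=
    hα.enorm.comp_quasiMeasurePreserving
      (measurePreserving_sub_right volume x).quasiMeasurePreserving
  calc ‖nonlocalOp α w u x‖ₑ ≤ ∫⁻ y, ‖α (y - x) * w (u y - u x)‖ₑ :=
        enorm_integral_le_lintegral_enorm _
    _ ≤ ∫⁻ y, M * (‖u y‖ₑ * ‖α (y - x)‖ₑ + ‖α (y - x)‖ₑ * ‖u x‖ₑ) := by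
        refine lintegral_mono fun y => ?_
        rw [enorm_mul, mul_comm ‖u y‖ₑ, ← mul_add, mul_left_comm]
        gcongr
        exact enorm_comp_sub_le_Mmax_mul hw hw0 (hub y) (hub x)
    _ = M * ((∫⁻ y, ‖u y‖ₑ * ‖α (y - x)‖ₑ) + (∫⁻ y, ‖α (y - x)‖ₑ) * ‖u x‖ₑ) := by
        rw [lintegral_const_mul' _ _ ofReal_ne_top, lintegral_add_right' _ (hα_shift.mul_const _),
          lintegral_mul_const' _ _ enorm_ne_top]
    _ = M * (((fun y => ‖u y‖ₑ) ⋆ₗ (fun z => ‖α (-z)‖ₑ)) x + (∫⁻ y, ‖α y‖ₑ) * ‖u x‖ₑ) := by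
        rw [lintegral_sub_right_eq_self (fun y => ‖α y‖ₑ) x, lconvolution_def]
        simp only [neg_add_eq_sub, neg_sub]

theorem eLpNorm_nonlocalOp_le {α w u : ℝ → ℝ} (hα : AEStronglyMeasurable α) (hw : ContDiff ℝ 1 w)
    (hw0 : w 0 = 0) {p : ℝ≥0∞} (hp1 : 1 ≤ p) (hp : p ≠ ⊤) (hu : AEStronglyMeasurable u) {R : ℝ}
    (hub : ∀ x, |u x| ≤ R) :
    eLpNorm (nonlocalOp α w u) p volume ≤
      2 * ENNReal.ofReal (Mmax w R) * (∫⁻ y, ‖α y‖ₑ) * eLpNorm u p volume := by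
  set M := ENNReal.ofReal (Mmax w R)
  set A := ∫⁻ y, ‖α y‖ₑ
  set v : ℝ → ℝ≥0∞ := fun y => ‖u y‖ₑ
  set α_neg : ℝ → ℝ≥0∞ := fun z => ‖α (-z)‖ₑ
  have hv : AEMeasurable v := hu.enorm
  have hα_neg : AEMeasurable α_neg :=
    hα.enorm.comp_quasiMeasurePreserving
      (Measure.measurePreserving_neg volume).quasiMeasurePreserving
  have young : eLpNorm (v ⋆ₗ α_neg) p volume ≤ A * eLpNorm u p volume := by
    rw [lconvolution_comm]
    refine (eLpNorm_lconvolution_le hp1 hp hα_neg hv).trans_eq ?_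
    rw [lintegral_neg_eq_self (fun y => ‖α y‖ₑ), eLpNorm_enorm]
  have scaled : eLpNorm (fun x => A * v x) p volume ≤ A * eLpNorm u p volume := by
    rw [← eLpNorm_enorm u]
    exact eLpNorm_le_mul_eLpNorm_of_ae_le_mul'' p hv.aestronglyMeasurable
      (ae_of_all _ fun x => le_rfl)
  calc eLpNorm (nonlocalOp α w u) p volume
      ≤ M * eLpNorm ((v ⋆ₗ α_neg) + fun x => A * v x) p volume :=
        eLpNorm_le_mul_eLpNorm_of_ae_le_mul'' p
          ((aemeasurable_lconvolution hv hα_neg).add (hv.const_mul A)).aestronglyMeasurable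
          (ae_of_all _ (enorm_nonlocalOp_le hα.aemeasurable hw hw0 hub))
    _ ≤ M * (eLpNorm (v ⋆ₗ α_neg) p volume + eLpNorm (fun x => A * v x) p volume) := by
        gcongr
        exact eLpNorm_add_le (aemeasurable_lconvolution hv hα_neg).aestronglyMeasurable
          (hv.const_mul A).aestronglyMeasurable hp1
    _ ≤ M * (A * eLpNorm u p volume + A * eLpNorm u p volume) := by gcongr
    _ = 2 * M * A * eLpNorm u p volume := by ring

theorem stmt3_general (α w : ℝ → ℝ) (hα : Integrable α) (hw : ContDiff ℝ 1 w) (hw0 : w 0 = 0)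
    (p : ℝ≥0∞) (hp1 : 1 ≤ p) (hp2 : p ≠ ⊤)
    (R : ℝ) (u : ℝ → ℝ)
    (hup : MemLp u p) (hub : ∀ x, |u x| ≤ R) :
    MemLp (fun x => ∫ y, α (y - x) * w (u y - u x)) p ∧
    eLpNorm (fun x => ∫ y, α (y - x) * w (u y - u x)) p volume ≤
      ENNReal.ofReal (2 * Mmax w R * (∫ y, |α y|)) * eLpNorm u p volume := by
  have bound := eLpNorm_nonlocalOp_le hα.1 hw hw0 hp1 hp2 hup.1 hub
  have const : ENNReal.ofReal (2 * Mmax w R * ∫ y, |α y|) =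
      2 * ENNReal.ofReal (Mmax w R) * ∫⁻ y, ‖α y‖ₑ := by
    rw [ENNReal.ofReal_mul (mul_nonneg zero_le_two (Mmax_nonneg w R)),
      ENNReal.ofReal_mul zero_le_two, ENNReal.ofReal_ofNat,
      ← ofReal_integral_norm_eq_lintegral_enorm hα]
    rfl
  refine ⟨⟨aestronglyMeasurable_nonlocalOp hα.1 hw.continuous hup.1, bound.trans_lt ?_⟩,
    const ▸ bound⟩
  exact ENNReal.mul_lt_top (ENNReal.mul_lt_top (by finiteness) hα.2) hup.2

theorem stmt3 (α w : ℝ → ℝ) (hα : Integrable α) (hw : ContDiff ℝ 1 w) (hw0 : w 0 = 0)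
    (p : ℝ≥0∞) (hp1 : 1 ≤ p) (hp2 : p ≠ ⊤)
    (R : ℝ) (hR : 0 < R) (u : ℝ → ℝ)
    (hup : MemLp u p) (huinf : MemLp u ⊤) (hub : ∀ x, |u x| ≤ R) :
    MemLp (fun x => ∫ y, α (y - x) * w (u y - u x)) p ∧
    eLpNorm (fun x => ∫ y, α (y - x) * w (u y - u x)) p volume ≤
      ENNReal.ofReal (2 * Mmax w R * (∫ y, |α y|)) * eLpNorm u p volume :=
  stmt3_general α w hα hw hw0 p hp1 hp2 R u hup hub
end

section
/- Let α ∈ L¹(ℝ), w ∈ C²(ℝ) with w(0) = 0, and let u : ℝ → ℝ be continuously differentiable with u and u' bounded. Then the function (Ku)(x) = ∫_ℝ α(y − x) w(u(y) − u(x)) dy is differentiable with derivative (Ku)'(x) = ∫_ℝ α(y − x) w'(u(y) − u(x)) (u'(y) − u'(x)) dy, and ‖(Ku)'‖_∞ ≤ 2 M(‖u‖_∞) ‖α‖_{L¹} ‖u'‖_∞, where M(R) = max_{|η| ≤ 2R} |w'(η)|. -/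
/-! After the substitution `y = t + z`, `(Ku)(z) = ∫ α(t) w(u(t + z) - u(z)) dt`, so `z` enters
only through a bounded factor whose `z`-derivative `w'(u(t + z) - u(z)) (u'(t + z) - u'(z))` is
bounded by `2 M(‖u‖_∞) ‖u'‖_∞`, because `|u(a) - u(b)| ≤ 2 ‖u‖_∞`. Dominated differentiation under
the integral sign, with majorant `|α|` times that constant, gives the derivative, and integrating
the majorant gives the bound. -/

open Set MeasureTheory

lemma abs_sub_le_two_mul_iSup_abs {ι : Type*} {f : ι → ℝ} (hf : BddAbove (range fun i => |f i|))
    (a b : ι) : |f a - f b| ≤ 2 * ⨆ i, |f i| := by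
  linarith [abs_sub (f a) (f b), le_ciSup hf a, le_ciSup hf b]

lemma abs_deriv_le_Mmax {w : ℝ → ℝ} (hw : Continuous (deriv w)) {R η : ℝ} (hη : |η| ≤ 2 * R) :
    |deriv w η| ≤ Mmax w R :=
  le_csSup (isCompact_Icc.image hw.abs).bddAbove ⟨η, abs_le.mp hη, rfl⟩

lemma integral_comp_sub_mul_eq_integral_mul_comp_add (α F : ℝ → ℝ) (z : ℝ) :
    ∫ y, α (y - z) * F y = ∫ t, α t * F (t + z) := by
  rw [← integral_add_right_eq_self (fun y => α (y - z) * F y) z]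
  simp only [add_sub_cancel_right]

lemma abs_mul_le_abs_mul_of_abs_le {a b B : ℝ} (hb : |b| ≤ B) : |a * b| ≤ |a| * B := by
  rw [abs_mul]
  exact mul_le_mul_of_nonneg_left hb (abs_nonneg a)

section WeightedIntegral

variable {Ω : Type*} [MeasurableSpace Ω] {μ : Measure Ω} {α : Ω → ℝ}

lemma abs_integral_mul_le (hα : Integrable α μ) {g : Ω → ℝ} {B : ℝ} (hg : ∀ t, |g t| ≤ B) :
    |∫ t, α t * g t ∂μ| ≤ (∫ t, |α t| ∂μ) * B := by
  rw [← integral_mul_const, ← Real.norm_eq_abs]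
  exact norm_integral_le_of_norm_le (hα.norm.mul_const B)
    (ae_of_all _ fun t => abs_mul_le_abs_mul_of_abs_le (hg t))

theorem hasDerivAt_integral_mul_of_bounded (hα : Integrable α μ) {g g' : Ω → ℝ → ℝ} {A B : ℝ}
    (hg_meas : ∀ z, AEStronglyMeasurable (fun t => g t z) μ)
    (hg'_meas : ∀ z, AEStronglyMeasurable (fun t => g' t z) μ)
    (hg_bound : ∀ t z, |g t z| ≤ A) (hg'_bound : ∀ t z, |g' t z| ≤ B)
    (hg_deriv : ∀ t z, HasDerivAt (g t) (g' t z) z) (x : ℝ) :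
    HasDerivAt (fun z => ∫ t, α t * g t z ∂μ) (∫ t, α t * g' t x ∂μ) x :=
  (hasDerivAt_integral_of_dominated_loc_of_deriv_le (F := fun z t => α t * g t z)
    (F' := fun z t => α t * g' t z) (bound := fun t => |α t| * B) Filter.univ_mem
    (Filter.Eventually.of_forall fun z => hα.aestronglyMeasurable.mul (hg_meas z))
    ((hα.norm.mul_const A).mono' (hα.aestronglyMeasurable.mul (hg_meas x))
      (ae_of_all _ fun t => abs_mul_le_abs_mul_of_abs_le (hg_bound t x)))
    (hα.aestronglyMeasurable.mul (hg'_meas x))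
    (ae_of_all _ fun t z _ => abs_mul_le_abs_mul_of_abs_le (hg'_bound t z))
    (hα.norm.mul_const B)
    (ae_of_all _ fun t z _ => (hg_deriv t z).const_mul (α t))).2

end WeightedIntegral

theorem stmt5_general (α w u : ℝ → ℝ) (hα : Integrable α)
    (hw : ContDiff ℝ 2 w)
    (hu : ContDiff ℝ 1 u)
    (hub : BddAbove (range fun x => |u x|))
    (hub' : BddAbove (range fun x => |deriv u x|)) :
    (∀ x : ℝ, HasDerivAt (fun z => ∫ y, α (y - z) * w (u y - u z))
        (∫ y, α (y - x) * (deriv w (u y - u x) * (deriv u y - deriv u x))) x) ∧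
    ∀ x : ℝ, |∫ y, α (y - x) * (deriv w (u y - u x) * (deriv u y - deriv u x))| ≤
      2 * Mmax w (⨆ z, |u z|) * (∫ y, |α y|) * (⨆ z, |deriv u z|) := by
  have hu_diff : Differentiable ℝ u := hu.differentiable one_ne_zero
  have hw_diff : Differentiable ℝ w := hw.differentiable two_ne_zero
  have hu' : Continuous (deriv u) := hu.continuous_deriv le_rfl
  have hw' : Continuous (deriv w) := hw.continuous_deriv one_le_two
  have hu_osc := abs_sub_le_two_mul_iSup_abs hub
  have hw'_bound (a b : ℝ) : |deriv w (u a - u b)| ≤ Mmax w (⨆ z, |u z|) :=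
    abs_deriv_le_Mmax hw' (hu_osc a b)
  obtain ⟨A, hA⟩ := isCompact_Icc.exists_bound_of_continuousOn hw_diff.continuous.continuousOn
    (s := Icc (-(2 * ⨆ z, |u z|)) (2 * ⨆ z, |u z|))
  have hfactor_deriv_bound (t z : ℝ) : |deriv w (u (t + z) - u z) * (deriv u (t + z) - deriv u z)| ≤
      Mmax w (⨆ z, |u z|) * (2 * ⨆ z, |deriv u z|) := by
    rw [abs_mul]
    exact mul_le_mul (hw'_bound _ _) (abs_sub_le_two_mul_iSup_abs hub' _ _) (abs_nonneg _)
      ((abs_nonneg _).trans (hw'_bound 0 0))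
  have hfactor_deriv (t z : ℝ) : HasDerivAt (fun z => w (u (t + z) - u z))
      (deriv w (u (t + z) - u z) * (deriv u (t + z) - deriv u z)) z :=
    (hw_diff _).hasDerivAt.comp z
      (((hu_diff _).hasDerivAt.comp_const_add t z).sub (hu_diff z).hasDerivAt)
  simp only [integral_comp_sub_mul_eq_integral_mul_comp_add]
  refine ⟨hasDerivAt_integral_mul_of_bounded hα (fun z => ?_) (fun z => ?_)
    (fun t z => hA _ (abs_le.mp (hu_osc _ _))) hfactor_deriv_bound hfactor_deriv, fun x => ?_⟩
  · exact (hw_diff.continuous.comp (by fun_prop)).aestronglyMeasurable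
  · exact (hw'.comp (by fun_prop)).mul (by fun_prop) |>.aestronglyMeasurable
  · calc _ ≤ (∫ y, |α y|) * (Mmax w (⨆ z, |u z|) * (2 * ⨆ z, |deriv u z|)) :=
          abs_integral_mul_le hα (hfactor_deriv_bound · x)
      _ = _ := by ring

theorem stmt5 (α w u : ℝ → ℝ) (hα : Integrable α)
    (hw : ContDiff ℝ 2 w) (hw0 : w 0 = 0)
    (hu : ContDiff ℝ 1 u)
    (hub : BddAbove (range fun x => |u x|))
    (hub' : BddAbove (range fun x => |deriv u x|)) :
    (∀ x : ℝ, HasDerivAt (fun z => ∫ y, α (y - z) * w (u y - u z))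
        (∫ y, α (y - x) * (deriv w (u y - u x) * (deriv u y - deriv u x))) x) ∧
    ∀ x : ℝ, |∫ y, α (y - x) * (deriv w (u y - u x) * (deriv u y - deriv u x))| ≤
      2 * Mmax w (⨆ z, |u z|) * (∫ y, |α y|) * (⨆ z, |deriv u z|) :=
  stmt5_general α w u hα hw hu hub hub'
end

section
/- Let α ∈ L¹(ℝ) and suppose w : ℝ → ℝ satisfies the sublinear bound |w(η)| ≤ a|η| + b for all η ∈ ℝ for some constants a, b ≥ 0. Let u : ℝ × [0,T) → ℝ be a bounded continuous solution of u(x,t) = φ(x) + tψ(x) + ∫₀^t (t−τ) ∫_ℝ α(y−x) w(u(y,τ)−u(x,τ)) dy dτ with φ, ψ bounded. Then for all t ∈ [0,T), ‖u(t)‖_∞ ≤ (‖φ‖_∞ + T‖ψ‖_∞ + bT²‖α‖_{L¹}) · e^{2aT‖α‖_{L¹} t}. In particular ‖u(t)‖_∞ does not blow up as t → T⁻. -/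
/-!
With `m t = ⨆ x, |u t x|`, the sublinear bound gives `|w (u τ y - u τ x)| ≤ 2 a m τ + b`, so the
integral equation yields the linear Volterra inequality `m t ≤ C + K ∫₀ᵗ m` with
`C = ‖φ‖ + T ‖ψ‖ + b T² ‖α‖₁` and `K = 2 a T ‖α‖₁`. Since `m` need not be measurable, Gronwall's
inequality is proved by Picard iteration through continuous majorants: starting from the a priori
bound `B`, the `n`-th iterate is `C ∑_{k<n} (K t)^k / k! + B (K t)^n / n!`, which tends to
`C exp (K t)`.
-/

open Set MeasureTheory Filter Topology

theorem mul_integral_pow_div_factorial (K t : ℝ) (k : ℕ) :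
    K * ∫ τ in (0:ℝ)..t, (K * τ) ^ k / k.factorial = (K * t) ^ (k + 1) / (k + 1).factorial := by
  simp_rw [mul_pow, mul_div_assoc, intervalIntegral.integral_const_mul,
    intervalIntegral.integral_div, integral_pow]
  push_cast [Nat.factorial_succ]
  field_simp
  ring

theorem le_mul_exp_of_le_add_mul_integral {v : ℝ → ℝ} {B C K T : ℝ}
    (hB : ∀ t ∈ Ico 0 T, v t ≤ B)
    (h : ∀ s : ℝ → ℝ, Continuous s → (∀ t ∈ Ico 0 T, v t ≤ s t) →
      ∀ t ∈ Ico 0 T, v t ≤ C + K * ∫ τ in (0:ℝ)..t, s τ) :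
    ∀ t ∈ Ico 0 T, v t ≤ C * Real.exp (K * t) := by
  set e : ℕ → ℝ → ℝ := fun k t => (K * t) ^ k / (k.factorial : ℝ)
  set S : ℕ → ℝ → ℝ := fun n t => C * ∑ k ∈ Finset.range n, e k t + B * e n t
  have he_cont (k : ℕ) : Continuous (e k) := by fun_prop
  have hS_cont (n : ℕ) : Continuous (S n) := by fun_prop
  have hS_succ (n : ℕ) (t : ℝ) : C + K * ∫ τ in (0:ℝ)..t, S n τ = S (n + 1) t := by
    have hint (k : ℕ) : IntervalIntegrable (e k) volume 0 t := (he_cont k).intervalIntegrable 0 t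
    have hS_int : ∫ τ in (0:ℝ)..t, S n τ
        = C * ∑ k ∈ Finset.range n, (∫ τ in (0:ℝ)..t, e k τ) + B * ∫ τ in (0:ℝ)..t, e n τ := by
      simp only [S]
      rw [intervalIntegral.integral_add
        ((by fun_prop : Continuous fun τ => C * ∑ k ∈ Finset.range n, e k τ).intervalIntegrable 0 t)
        ((hint n).const_mul B), intervalIntegral.integral_const_mul,
        intervalIntegral.integral_finsetSum fun k _ => hint k, intervalIntegral.integral_const_mul]
    have hKe (k : ℕ) : K * ∫ τ in (0:ℝ)..t, e k τ = e (k + 1) t :=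
      mul_integral_pow_div_factorial K t k
    have he0 : e 0 t = 1 := by simp [e]
    rw [hS_int]
    simp only [S, Finset.sum_range_succ', he0, ← hKe, mul_add, Finset.mul_sum, mul_left_comm K]
    ring
  have hv (n : ℕ) : ∀ t ∈ Ico 0 T, v t ≤ S n t := by
    induction n with
    | zero => simpa [S, e] using hB
    | succ n ih => exact fun t ht => hS_succ n t ▸ h (S n) (hS_cont n) ih t ht
  intro t ht
  have hS_lim : Tendsto (fun n => S n t) atTop (𝓝 (C * Real.exp (K * t) + B * 0)) := by
    refine ((?_ : Tendsto _ _ _).const_mul C).add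
      ((FloorSemiring.tendsto_pow_div_factorial_atTop (K * t)).const_mul B)
    rw [Real.exp_eq_exp_ℝ]
    exact (NormedSpace.expSeries_div_hasSum_exp (K * t)).tendsto_sum_nat
  simpa using ge_of_tendsto' hS_lim fun n => hv n t ht

theorem abs_integral_comp_sub_mul_le {α g : ℝ → ℝ} (hα : Integrable α) {M : ℝ}
    (hg : ∀ y, |g y| ≤ M) (x : ℝ) :
    |∫ y, α (y - x) * g y| ≤ M * ∫ y, |α y| := by
  calc |∫ y, α (y - x) * g y| ≤ ∫ y, |α (y - x)| * M :=
        norm_integral_le_of_norm_le ((hα.comp_sub_right x).abs.mul_const M)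
          (.of_forall fun y => by
            rw [Real.norm_eq_abs, abs_mul]
            exact mul_le_mul_of_nonneg_left (hg y) (abs_nonneg _))
    _ = M * ∫ y, |α y| := by
        rw [integral_mul_const, integral_sub_right_eq_self (fun y => |α y|) x, mul_comm]

theorem abs_integral_comp_sub_mul_sublinear_le {α w v : ℝ → ℝ} (hα : Integrable α) {a b P : ℝ}
    (ha : 0 ≤ a) (hsub : ∀ η : ℝ, |w η| ≤ a * |η| + b) (hv : ∀ y, |v y| ≤ P) (x : ℝ) :
    |∫ y, α (y - x) * w (v y - v x)| ≤ (2 * a * P + b) * ∫ y, |α y| := by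
  refine abs_integral_comp_sub_mul_le hα (fun y => ?_) x
  calc |w (v y - v x)| ≤ a * (|v y| + |v x|) + b :=
        (hsub _).trans (by gcongr; exact abs_sub _ _)
    _ ≤ 2 * a * P + b := by nlinarith [hv y, hv x]

theorem abs_integral_sub_mul_le {F G : ℝ → ℝ} {t T : ℝ} (ht : 0 ≤ t) (htT : t ≤ T)
    (hG : IntervalIntegrable G volume 0 t) (hFG : ∀ τ ∈ Icc 0 t, |F τ| ≤ G τ) :
    |∫ τ in (0:ℝ)..t, (t - τ) * F τ| ≤ T * ∫ τ in (0:ℝ)..t, G τ := by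
  rw [← Real.norm_eq_abs, ← intervalIntegral.integral_const_mul]
  refine intervalIntegral.norm_integral_le_of_norm_le ht (.of_forall fun τ hτ => ?_)
    (hG.const_mul T)
  rw [Real.norm_eq_abs, abs_mul, abs_of_nonneg (sub_nonneg.2 hτ.2)]
  exact mul_le_mul (by linarith [hτ.1]) (hFG τ (Ioc_subset_Icc_self hτ))
    (abs_nonneg _) (ht.trans htT)

section IntegralEquation

variable {α w φ ψ : ℝ → ℝ} {u : ℝ → ℝ → ℝ} {a b T : ℝ}

theorem abs_le_add_mul_integral_of_integral_equation (hα : Integrable α) (ha : 0 ≤ a)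
    (hb : 0 ≤ b) (hsub : ∀ η : ℝ, |w η| ≤ a * |η| + b)
    (hφ : BddAbove (range fun x => |φ x|)) (hψ : BddAbove (range fun x => |ψ x|))
    (hsol : ∀ t ∈ Ico (0:ℝ) T, ∀ x : ℝ,
      u t x = φ x + t * ψ x +
        ∫ τ in (0:ℝ)..t, (t - τ) * ∫ y : ℝ, α (y - x) * w (u τ y - u τ x))
    {s : ℝ → ℝ} (hs : Continuous s) (hus : ∀ τ ∈ Ico 0 T, ∀ y, |u τ y| ≤ s τ)
    {t : ℝ} (ht : t ∈ Ico 0 T) (x : ℝ) :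
    |u t x| ≤ ((⨆ x, |φ x|) + T * (⨆ x, |ψ x|) + b * T ^ 2 * ∫ y, |α y|) +
      2 * a * T * (∫ y, |α y|) * ∫ τ in (0:ℝ)..t, s τ := by
  set A := ∫ y, |α y|
  have hA : 0 ≤ A := integral_nonneg fun y => abs_nonneg _
  have hduhamel := abs_integral_sub_mul_le ht.1 ht.2.le
    ((by fun_prop : Continuous fun τ => (2 * a * s τ + b) * A).intervalIntegrable 0 t)
    fun τ hτ => abs_integral_comp_sub_mul_sublinear_le hα ha hsub
      (hus τ ⟨hτ.1, hτ.2.trans_lt ht.2⟩) x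
  have hintegral : ∫ τ in (0:ℝ)..t, (2 * a * s τ + b) * A
      = 2 * a * A * (∫ τ in (0:ℝ)..t, s τ) + b * A * t := by
    rw [intervalIntegral.integral_mul_const, intervalIntegral.integral_add
      ((hs.intervalIntegrable 0 t).const_mul _) intervalIntegrable_const,
      intervalIntegral.integral_const_mul, intervalIntegral.integral_const, sub_zero, smul_eq_mul]
    ring
  have hT : 0 ≤ T := ht.1.trans ht.2.le
  have hdata : |φ x + t * ψ x| ≤ (⨆ x, |φ x|) + T * ⨆ x, |ψ x| := by
    calc |φ x + t * ψ x| ≤ |φ x| + t * |ψ x| :=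
          (abs_add_le _ _).trans_eq (by rw [abs_mul, abs_of_nonneg ht.1])
      _ ≤ (⨆ x, |φ x|) + T * ⨆ x, |ψ x| :=
          add_le_add (le_ciSup hφ x) (mul_le_mul ht.2.le (le_ciSup hψ x) (abs_nonneg _) hT)
  have hbT : b * A * t * T ≤ b * T ^ 2 * A := by
    nlinarith [mul_le_mul_of_nonneg_left ht.2.le (by positivity : 0 ≤ b * A * T)]
  rw [hsol t ht x]
  calc _ ≤ |φ x + t * ψ x| + |∫ τ in (0:ℝ)..t, (t - τ) * ∫ y, α (y - x) * w (u τ y - u τ x)| :=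
        abs_add_le _ _
    _ ≤ _ := by rw [hintegral] at hduhamel; nlinarith [hdata, hduhamel]

end IntegralEquation

theorem stmt15_general (α w : ℝ → ℝ) (hα : Integrable α)
    (a b : ℝ) (ha : 0 ≤ a) (hb : 0 ≤ b)
    (hsub : ∀ η : ℝ, |w η| ≤ a * |η| + b)
    (T : ℝ) (φ ψ : ℝ → ℝ)
    (hφ : BddAbove (range fun x => |φ x|)) (hψ : BddAbove (range fun x => |ψ x|))
    (u : ℝ → ℝ → ℝ)
    (hbdd : ∃ B : ℝ, ∀ t ∈ Ico (0:ℝ) T, ∀ x, |u t x| ≤ B)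
    (hsol : ∀ t ∈ Ico (0:ℝ) T, ∀ x : ℝ,
      u t x = φ x + t * ψ x +
        ∫ τ in (0:ℝ)..t, (t - τ) * ∫ y : ℝ, α (y - x) * w (u τ y - u τ x)) :
    ∀ t ∈ Ico (0:ℝ) T,
      (⨆ x, |u t x|) ≤
        ((⨆ x, |φ x|) + T * (⨆ x, |ψ x|) + b * T^2 * ∫ y, |α y|) *
          Real.exp (2 * a * T * (∫ y, |α y|) * t) := by
  obtain ⟨B, hB⟩ := hbdd
  refine le_mul_exp_of_le_add_mul_integral (fun t ht => ciSup_le (hB t ht)) ?_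
  intro s hs hus t ht
  refine ciSup_le fun x => abs_le_add_mul_integral_of_integral_equation hα ha hb hsub hφ hψ hsol hs
    (fun τ hτ y => (le_ciSup ⟨B, forall_mem_range.2 (hB τ hτ)⟩ y).trans (hus τ hτ)) ht x

theorem stmt15 (α w : ℝ → ℝ) (hα : Integrable α) (hw : Continuous w)
    (a b : ℝ) (ha : 0 ≤ a) (hb : 0 ≤ b)
    (hsub : ∀ η : ℝ, |w η| ≤ a * |η| + b)
    (T : ℝ) (hT : 0 < T) (φ ψ : ℝ → ℝ)
    (hφ : BddAbove (range fun x => |φ x|)) (hψ : BddAbove (range fun x => |ψ x|))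
    (u : ℝ → ℝ → ℝ)
    (hcont : ∀ t ∈ Ico (0:ℝ) T, Continuous (u t))
    (hbdd : ∃ B : ℝ, ∀ t ∈ Ico (0:ℝ) T, ∀ x, |u t x| ≤ B)
    (hsol : ∀ t ∈ Ico (0:ℝ) T, ∀ x : ℝ,
      u t x = φ x + t * ψ x +
        ∫ τ in (0:ℝ)..t, (t - τ) * ∫ y : ℝ, α (y - x) * w (u τ y - u τ x)) :
    ∀ t ∈ Ico (0:ℝ) T,
      (⨆ x, |u t x|) ≤
        ((⨆ x, |φ x|) + T * (⨆ x, |ψ x|) + b * T^2 * ∫ y, |α y|) *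
          Real.exp (2 * a * T * (∫ y, |α y|) * t) :=
  stmt15_general α w hα a b ha hb hsub T φ ψ hφ hψ u hbdd hsol
end

section
/- Suppose H(t) = ‖u(t)‖_{L²}² + b(t+t₀)² where u : [0,∞) → L²(ℝ) is C², b > 0, t₀ > 0. If 2⟨u(t), u_tt(t)⟩ ≥ 4(1+2ν)((1/2)‖u_t(t)‖₂² − E₀) for all t, with E₀ < 0 and 0 < b ≤ −2E₀, then H''(t)H(t) − (1+ν)(H'(t))² ≥ 0 for all t ≥ 0. -/
/-!
Viewing `H = ‖u‖² + b (t + t₀)²` as the squared norm of `(u, √b (t + t₀))`, Cauchy–Schwarz gives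
`(H')² ≤ 4 H K` with `K = ‖u_t‖² + b`, while the hypothesis on `⟨u, u_tt⟩` together with
`b ≤ -2E₀` gives `H'' ≥ 4 (1 + ν) K`. Multiplying the second bound by `H ≥ 0` and comparing with
the first yields `H'' H ≥ (1 + ν) (H')²`.
-/

open scoped RealInnerProductSpace

theorem inner_add_mul_sq_le {E : Type*} [NormedAddCommGroup E] [InnerProductSpace ℝ E]
    (x y : E) {b : ℝ} (hb : 0 ≤ b) (s : ℝ) :
    (⟪x, y⟫ + b * s) ^ 2 ≤ (‖x‖ ^ 2 + b * s ^ 2) * (‖y‖ ^ 2 + b) := by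
  have hxy : |⟪x, y⟫ + b * s| ≤ ‖x‖ * ‖y‖ + b * |s| := by
    calc |⟪x, y⟫ + b * s| ≤ |⟪x, y⟫| + |b * s| := abs_add_le _ _
      _ ≤ ‖x‖ * ‖y‖ + b * |s| := by
        rw [abs_mul, abs_of_nonneg hb]
        linarith [abs_real_inner_le_norm x y]
  calc (⟪x, y⟫ + b * s) ^ 2 = |⟪x, y⟫ + b * s| ^ 2 := (sq_abs _).symm
    _ ≤ (‖x‖ * ‖y‖ + b * |s|) ^ 2 := pow_le_pow_left₀ (abs_nonneg _) hxy 2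
    _ ≤ (‖x‖ ^ 2 + b * s ^ 2) * (‖y‖ ^ 2 + b) := by
      -- the gap is exactly `b (‖x‖ - |s| ‖y‖)²`
      rw [← sq_abs s]
      nlinarith [mul_nonneg hb (sq_nonneg (‖x‖ - |s| * ‖y‖))]

theorem mul_sub_one_add_mul_sq_nonneg {H H' H'' K ν : ℝ} (hH : 0 ≤ H) (hν : 0 ≤ 1 + ν)
    (hH'' : 4 * (1 + ν) * K ≤ H'') (hH' : H' ^ 2 ≤ 4 * H * K) :
    0 ≤ H'' * H - (1 + ν) * H' ^ 2 := by
  nlinarith [mul_le_mul_of_nonneg_right hH'' hH, mul_le_mul_of_nonneg_left hH' hν]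

theorem stmt18_general (E : Type*) [NormedAddCommGroup E] [InnerProductSpace ℝ E]
    (u ut utt : ℝ → E)
    (ν b t₀ E₀ : ℝ) (hν : 0 < ν) (hb : 0 < b) (hb' : b ≤ -2 * E₀)
    (hineq : ∀ t ≥ (0:ℝ), 2 * ⟪u t, utt t⟫ ≥ 4 * (1 + 2*ν) * ((1/2) * ‖ut t‖^2 - E₀)) :
    ∀ t ≥ (0:ℝ),
      (2 * ‖ut t‖^2 + 2 * ⟪u t, utt t⟫ + 2*b) * (‖u t‖^2 + b * (t + t₀)^2) -
        (1 + ν) * (2 * ⟪u t, ut t⟫ + 2 * b * (t + t₀))^2 ≥ 0 := by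
  intro t ht
  have hH : 0 ≤ ‖u t‖ ^ 2 + b * (t + t₀) ^ 2 := by positivity
  have hH' : (2 * ⟪u t, ut t⟫ + 2 * b * (t + t₀)) ^ 2 ≤
      4 * (‖u t‖ ^ 2 + b * (t + t₀) ^ 2) * (‖ut t‖ ^ 2 + b) := by
    nlinarith [inner_add_mul_sq_le (u t) (ut t) hb.le (t + t₀)]
  have hH'' : 4 * (1 + ν) * (‖ut t‖ ^ 2 + b) ≤ 2 * ‖ut t‖ ^ 2 + 2 * ⟪u t, utt t⟫ + 2 * b := by
    nlinarith [hineq t ht, mul_nonneg (by linarith : (0:ℝ) ≤ 1 + 2 * ν) (sub_nonneg.2 hb')]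
  exact mul_sub_one_add_mul_sq_nonneg hH (by linarith) hH'' hH'

theorem stmt18 (E : Type*) [NormedAddCommGroup E] [InnerProductSpace ℝ E]
    (u ut utt : ℝ → E)
    (hder1 : ∀ t ≥ (0:ℝ), HasDerivAt u (ut t) t)
    (hder2 : ∀ t ≥ (0:ℝ), HasDerivAt ut (utt t) t)
    (ν b t₀ E₀ : ℝ) (hν : 0 < ν) (hE₀ : E₀ < 0) (hb : 0 < b) (hb' : b ≤ -2 * E₀)
    (ht₀ : 0 < t₀)
    (hineq : ∀ t ≥ (0:ℝ), 2 * ⟪u t, utt t⟫ ≥ 4 * (1 + 2*ν) * ((1/2) * ‖ut t‖^2 - E₀)) :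
    ∀ t ≥ (0:ℝ),
      (2 * ‖ut t‖^2 + 2 * ⟪u t, utt t⟫ + 2*b) * (‖u t‖^2 + b * (t + t₀)^2) -
        (1 + ν) * (2 * ⟪u t, ut t⟫ + 2 * b * (t + t₀))^2 ≥ 0 :=
  stmt18_general E u ut utt ν b t₀ E₀ hν hb hb' hineq
end
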